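/- For every integer N ≥ 3, every eigenvalue λ ∈ ℂ of the matrix A_0 (viewed as a complex matrix by mapping its real entries into ℂ) has strictly positive real part. -/

import Mathlib

/-! If `v = x + i y` is an eigenvector of a real matrix `A` for `μ`, then
`Re μ · (xᵀx + yᵀy) = xᵀAx + yᵀAy`, so `Re μ ≥ c` as soon as `xᵀAx ≥ c · xᵀx` for all real `x`.
For `A₀ = hᵝc₀ I − σ (e₁G + e₂Gᵀ)` this reduces to `xᵀGx ≤ 0`, which follows from
`2 xᵀMx = ∑ᵢ (rᵢ + cᵢ) xᵢ² − ½ ∑ᵢⱼ (Mᵢⱼ + Mⱼᵢ)(xᵢ − xⱼ)²`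
(`rᵢ`, `cᵢ` the row and column sums of `M`). For `M = G`, each `rᵢ + cᵢ` reduces to a sum of two
of `ω₁` and the partial sums `∑_{k ≤ m} ω_k` (`m ≥ 2`), all negative because
`β ∑_{k ≤ n} g_k = -(n + 1) g_{n+1}` and `g_k > 0` for `k ≥ 2`; and for `i ≠ j`, `Gᵢⱼ + Gⱼᵢ` is
`ω₀ + ω₂` or some `ω_k` with `k ≥ 3`, all nonnegative. -/

open scoped Matrix

/-- The coefficients `g_k^{(β)}`. -/
noncomputable def gcoef (β : ℝ) : ℕ → ℝ
  | 0 => 1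
  | k + 1 => (1 - (β + 1) / ((k : ℝ) + 1)) * gcoef β k

/-- The WSGD coefficients `ω_k^{(β)}`. -/
noncomputable def w (β : ℝ) : ℕ → ℝ
  | 0 => β / 2 * gcoef β 0
  | k + 1 => β / 2 * gcoef β (k + 1) + (2 - β) / 2 * gcoef β k
/-- The `(N−1) × (N−1)` lower Hessenberg Toeplitz matrix `G_β`
(1-based entry `(i,j)` equals `ω_{i−j+1}` when `i − j + 1 ≥ 0`, else `0`). -/
noncomputable def Gmat (β : ℝ) (N : ℕ) : Matrix (Fin (N - 1)) (Fin (N - 1)) ℝ :=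
  Matrix.of fun i j => if (j : ℕ) ≤ (i : ℕ) + 1 then w β ((i : ℕ) + 1 - (j : ℕ)) else 0

/-- `K_N = e₁·G_β + e₂·G_βᵀ`. -/
noncomputable def Kmat (β e1 e2 : ℝ) (N : ℕ) : Matrix (Fin (N - 1)) (Fin (N - 1)) ℝ :=
  e1 • Gmat β N + e2 • (Gmat β N)ᵀ
/-- `c_0^{(α,σ)} = τ^{−α}·σ^{1−α}/Γ(2−α)` with `σ = 1 − α/2`. -/
noncomputable def c0 (α τ : ℝ) : ℝ :=
  τ ^ (-α) * (1 - α / 2) ^ (1 - α) / Real.Gamma (2 - α)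

/-- `A_0 = h^β·c_0^{(α,σ)}·I − σ·K_N` with `σ = 1 − α/2`. -/
noncomputable def A0mat (β α h τ e1 e2 : ℝ) (N : ℕ) :
    Matrix (Fin (N - 1)) (Fin (N - 1)) ℝ :=
  (h ^ β * c0 α τ) • (1 : Matrix (Fin (N - 1)) (Fin (N - 1)) ℝ) -
    (1 - α / 2) • Kmat β e1 e2 N

open Finset

theorem Matrix.le_re_of_mem_spectrum_map_ofReal {ι : Type*} [Fintype ι] [DecidableEq ι]
    (A : Matrix ι ι ℝ) (c : ℝ) (hA : ∀ x : ι → ℝ, c * (x ⬝ᵥ x) ≤ x ⬝ᵥ (A *ᵥ x)) {μ : ℂ}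
    (hμ : μ ∈ spectrum ℂ (A.map Complex.ofReal)) : c ≤ μ.re := by
  rw [← Matrix.spectrum_toLin', ← Module.End.hasEigenvalue_iff_mem_spectrum] at hμ
  obtain ⟨v, hv⟩ := hμ.exists_hasEigenvector
  have hAv : A.map Complex.ofReal *ᵥ v = μ • v := hv.apply_eq_smul
  set x : ι → ℝ := fun i => (v i).re
  set y : ι → ℝ := fun i => (v i).im
  have hx : A *ᵥ x = μ.re • x - μ.im • y := by
    ext i
    simpa [Matrix.mulVec, dotProduct, Complex.re_sum, x, y] using
      congrArg (fun u => (u i).re) hAv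
  have hy : A *ᵥ y = μ.im • x + μ.re • y := by
    ext i
    simpa [Matrix.mulVec, dotProduct, Complex.im_sum, x, y, add_comm] using
      congrArg (fun u => (u i).im) hAv
  have hnorm : 0 < x ⬝ᵥ x + y ⬝ᵥ y := by
    have hxy : x ≠ 0 ∨ y ≠ 0 := by
      by_contra! h
      exact hv.2 (funext fun i => Complex.ext (congrFun h.1 i) (congrFun h.2 i))
    have hx0 : 0 ≤ x ⬝ᵥ x := by simpa using dotProduct_star_self_nonneg x
    have hy0 : 0 ≤ y ⬝ᵥ y := by simpa using dotProduct_star_self_nonneg y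
    rcases hxy with h | h
    · have : 0 < x ⬝ᵥ x := by simpa using Matrix.dotProduct_star_self_pos_iff.2 h
      linarith
    · have : 0 < y ⬝ᵥ y := by simpa using Matrix.dotProduct_star_self_pos_iff.2 h
      linarith
  have hre : x ⬝ᵥ (A *ᵥ x) + y ⬝ᵥ (A *ᵥ y) = μ.re * (x ⬝ᵥ x + y ⬝ᵥ y) := by
    rw [hx, hy]
    simp only [dotProduct_sub, dotProduct_add, dotProduct_smul, smul_eq_mul, dotProduct_comm y x]
    ring
  nlinarith [hA x, hA y]

theorem Matrix.dotProduct_mulVec_nonpos_of_sum_row_add_sum_col_nonpos {ι : Type*} [Fintype ι]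
    (M : Matrix ι ι ℝ) (hsum : ∀ i, ∑ j, M i j + ∑ j, M j i ≤ 0)
    (hoff : ∀ i j, i ≠ j → 0 ≤ M i j + M j i) (x : ι → ℝ) : x ⬝ᵥ (M *ᵥ x) ≤ 0 := by
  have hsq : ∑ i, ∑ j, (M i j + M j i) * (x i - x j) ^ 2
      = 2 * ∑ i, (∑ j, M i j + ∑ j, M j i) * x i ^ 2 - 4 * x ⬝ᵥ (M *ᵥ x) := by
    simp only [dotProduct, Matrix.mulVec, add_mul, sum_add_distrib, mul_sum, sum_mul]
    rw [sum_comm (f := fun i j => M j i * (x i - x j) ^ 2),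
      sum_comm (f := fun i j => M j i * x i ^ 2)]
    simp only [← sum_add_distrib, ← sum_sub_distrib, mul_sum]
    refine sum_congr rfl fun i _ => sum_congr rfl fun j _ => ?_
    ring
  have hsq_nonneg : 0 ≤ ∑ i, ∑ j, (M i j + M j i) * (x i - x j) ^ 2 := by
    refine sum_nonneg fun i _ => sum_nonneg fun j _ => ?_
    rcases eq_or_ne i j with rfl | hij
    · simp
    · exact mul_nonneg (hoff i j hij) (sq_nonneg _)
  have hdiag : ∑ i, (∑ j, M i j + ∑ j, M j i) * x i ^ 2 ≤ 0 :=
    sum_nonpos fun i _ => mul_nonpos_of_nonpos_of_nonneg (hsum i) (sq_nonneg _)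
  linarith

theorem sum_range_ite_le_eq_sum_Ico {M : Type*} [AddCommMonoid M] (f : ℕ → M) (n a : ℕ) :
    ∑ j ∈ range n, (if j ≤ a then f (a - j) else 0) = ∑ k ∈ Ico (a + 1 - n) (a + 1), f k := by
  rw [← sum_filter]
  refine sum_nbij' (fun j => a - j) (fun k => a - k) ?_ ?_ ?_ ?_ ?_ <;> intro j hj <;> grind

theorem sum_range_ite_le_succ_eq_sum_Ico {M : Type*} [AddCommMonoid M] (f : ℕ → M) (n b : ℕ) :
    ∑ i ∈ range n, (if b ≤ i + 1 then f (i + 1 - b) else 0)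
      = ∑ k ∈ Ico (1 - b) (n + 1 - b), f k := by
  rw [← sum_filter]
  refine sum_nbij' (fun i => i + 1 - b) (fun k => k + b - 1) ?_ ?_ ?_ ?_ ?_ <;> intro j hj <;> grind

theorem gcoef_two (β : ℝ) : gcoef β 2 = β * (β - 1) / 2 := by
  simp [gcoef]; ring

theorem gcoef_pos {β : ℝ} (hβ1 : 1 < β) (hβ2 : β < 2) {k : ℕ} (hk : 2 ≤ k) :
    0 < gcoef β k := by
  induction k, hk using Nat.le_induction with
  | base => rw [gcoef_two]; nlinarith
  | succ k hk ih =>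
    have hk' : (2 : ℝ) ≤ k := by exact_mod_cast hk
    have hfactor : 0 < 1 - (β + 1) / ((k : ℝ) + 1) := by
      rw [sub_pos, div_lt_one (by linarith)]; linarith
    exact mul_pos hfactor ih

theorem mul_sum_range_gcoef (β : ℝ) (n : ℕ) :
    β * ∑ k ∈ range (n + 1), gcoef β k = -((n : ℝ) + 1) * gcoef β (n + 1) := by
  induction n with
  | zero => simp [gcoef]
  | succ n ih =>
    have hrec : ((n : ℝ) + 2) * gcoef β (n + 2) = ((n : ℝ) + 1 - β) * gcoef β (n + 1) := by
      simp only [gcoef]; push_cast; field_simp; ring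
    rw [sum_range_succ, mul_add, ih]
    push_cast
    linarith

theorem sum_range_gcoef_neg {β : ℝ} (hβ1 : 1 < β) (hβ2 : β < 2) {n : ℕ} (hn : 1 ≤ n) :
    ∑ k ∈ range (n + 1), gcoef β k < 0 := by
  have h := mul_sum_range_gcoef β n
  have hg := gcoef_pos hβ1 hβ2 (k := n + 1) (by omega)
  have : β * ∑ k ∈ range (n + 1), gcoef β k < 0 := by rw [h]; nlinarith
  exact neg_of_mul_neg_right this (by linarith)

theorem w_one_neg {β : ℝ} (hβ1 : 1 < β) : w β 1 < 0 := by
  simp only [w, gcoef]; nlinarith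

theorem w_zero_add_w_two_nonneg {β : ℝ} (hβ1 : 1 < β) : 0 ≤ w β 0 + w β 2 := by
  have h : w β 0 + w β 2 = β * (β + 2) * (β - 1) / 4 := by
    simp only [w, gcoef]; ring
  rw [h]
  have : 0 ≤ β - 1 := by linarith
  positivity

theorem w_nonneg {β : ℝ} (hβ1 : 1 < β) (hβ2 : β < 2) {k : ℕ} (hk : 3 ≤ k) : 0 ≤ w β k := by
  obtain ⟨k, rfl⟩ : ∃ m, k = m + 1 := ⟨k - 1, by omega⟩
  have h1 := gcoef_pos hβ1 hβ2 (k := k + 1) (by omega)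
  have h2 := gcoef_pos hβ1 hβ2 (k := k) (by omega)
  simp only [w]
  nlinarith

theorem sum_range_w (β : ℝ) (n : ℕ) : ∑ k ∈ range (n + 1), w β k
    = β / 2 * ∑ k ∈ range (n + 1), gcoef β k + (2 - β) / 2 * ∑ k ∈ range n, gcoef β k := by
  rw [sum_range_succ', sum_range_succ' (gcoef β)]
  simp only [w, sum_add_distrib, mul_sum, mul_add]
  ring

theorem sum_range_w_neg {β : ℝ} (hβ1 : 1 < β) (hβ2 : β < 2) {n : ℕ} (hn : 2 ≤ n) :
    ∑ k ∈ range (n + 1), w β k < 0 := by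
  obtain ⟨n, rfl⟩ : ∃ m, n = m + 1 := ⟨n - 1, by omega⟩
  have h1 := sum_range_gcoef_neg hβ1 hβ2 (n := n + 1) (by omega)
  have h2 := sum_range_gcoef_neg hβ1 hβ2 (n := n) (by omega)
  rw [sum_range_w]
  nlinarith

theorem Gmat_apply (β : ℝ) (N : ℕ) (i j : Fin (N - 1)) :
    Gmat β N i j = if (j : ℕ) ≤ i + 1 then w β (i + 1 - j) else 0 := rfl

-- With truncated subtraction, the lower bounds below are `0` except in the last row and in the
-- first column, where they are `1`.
theorem sum_Gmat_row (β : ℝ) (N : ℕ) (i : Fin (N - 1)) :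
    ∑ j, Gmat β N i j = ∑ k ∈ Ico (i + 2 - (N - 1)) (i + 2), w β k := by
  simp only [Gmat_apply]
  rw [Fin.sum_univ_eq_sum_range (fun j => if j ≤ (i : ℕ) + 1 then w β (i + 1 - j) else 0),
    sum_range_ite_le_eq_sum_Ico]

theorem sum_Gmat_col (β : ℝ) (N : ℕ) (j : Fin (N - 1)) :
    ∑ i, Gmat β N i j = ∑ k ∈ Ico (1 - (j : ℕ)) (N - 1 + 1 - j), w β k := by
  simp only [Gmat_apply]
  rw [Fin.sum_univ_eq_sum_range (fun i => if (j : ℕ) ≤ i + 1 then w β (i + 1 - j) else 0),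
    sum_range_ite_le_succ_eq_sum_Ico]

theorem sum_Gmat_row_add_col_nonpos {β : ℝ} (hβ1 : 1 < β) (hβ2 : β < 2) (N : ℕ)
    (i : Fin (N - 1)) : ∑ j, Gmat β N i j + ∑ j, Gmat β N j i ≤ 0 := by
  have hi : (i : ℕ) < N - 1 := i.isLt
  rw [sum_Gmat_row, sum_Gmat_col]
  generalize (i : ℕ) = i at hi ⊢
  generalize N - 1 = n at hi ⊢
  have hw1 := w_one_neg hβ1
  have hhead : ∑ k ∈ Ico 0 2, w β k = w β 0 + w β 1 := by
    simp [sum_range_succ]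
  have htail : ∀ m, ∑ k ∈ Ico 1 (m + 1), w β k = ∑ k ∈ range (m + 1), w β k - w β 0 := by
    intro m; rw [sum_Ico_eq_sub _ (by omega), sum_range_one]
  rcases Nat.eq_zero_or_pos i with rfl | hi0 <;>
    rcases eq_or_lt_of_le (Nat.succ_le_of_lt hi) with rfl | hinner
  · simpa using hw1.le
  · have := sum_range_w_neg hβ1 hβ2 (n := n) (by omega)
    rw [show 0 + 2 - n = 0 by omega, Nat.sub_zero, Nat.sub_zero, hhead, htail]
    linarith
  · have := sum_range_w_neg hβ1 hβ2 (n := i + 1) (by omega)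
    rw [show i + 2 - (i + 1) = 1 by omega, show 1 - i = 0 by omega,
      show i + 1 + 1 - i = 2 by omega, hhead, htail]
    linarith
  · have h1 := sum_range_w_neg hβ1 hβ2 (n := i + 1) (by omega)
    have h2 := sum_range_w_neg hβ1 hβ2 (n := n - i) (by omega)
    rw [show i + 2 - n = 0 by omega, show 1 - i = 0 by omega, show n + 1 - i = n - i + 1 by omega,
      ← range_eq_Ico, ← range_eq_Ico]
    linarith

theorem Gmat_add_Gmat_swap_nonneg {β : ℝ} (hβ1 : 1 < β) (hβ2 : β < 2) (N : ℕ)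
    {i j : Fin (N - 1)} (hij : i ≠ j) : 0 ≤ Gmat β N i j + Gmat β N j i := by
  wlog hlt : i < j generalizing i j
  · rw [add_comm]; exact this hij.symm (lt_of_le_of_ne (not_lt.1 hlt) hij.symm)
  have hlt' : (i : ℕ) < j := hlt
  rw [Gmat_apply, Gmat_apply, if_pos (show (i : ℕ) ≤ j + 1 by omega)]
  rcases eq_or_lt_of_le (Nat.succ_le_of_lt hlt') with hsucc | hfar
  · rw [if_pos (by omega), show (i : ℕ) + 1 - j = 0 by omega, show (j : ℕ) + 1 - i = 2 by omega]
    exact w_zero_add_w_two_nonneg hβ1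
  · rw [if_neg (by omega), zero_add]
    exact w_nonneg hβ1 hβ2 (by omega)

theorem dotProduct_Gmat_mulVec_nonpos {β : ℝ} (hβ1 : 1 < β) (hβ2 : β < 2) (N : ℕ)
    (x : Fin (N - 1) → ℝ) : x ⬝ᵥ (Gmat β N *ᵥ x) ≤ 0 :=
  Matrix.dotProduct_mulVec_nonpos_of_sum_row_add_sum_col_nonpos _
    (sum_Gmat_row_add_col_nonpos hβ1 hβ2 N) (fun _ _ => Gmat_add_Gmat_swap_nonneg hβ1 hβ2 N) x

theorem dotProduct_Kmat_mulVec_nonpos {β e1 e2 : ℝ} (hβ1 : 1 < β) (hβ2 : β < 2)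
    (he1 : 0 ≤ e1) (he2 : 0 ≤ e2) (N : ℕ) (x : Fin (N - 1) → ℝ) :
    x ⬝ᵥ (Kmat β e1 e2 N *ᵥ x) ≤ 0 := by
  have hG := dotProduct_Gmat_mulVec_nonpos hβ1 hβ2 N x
  have htranspose : x ⬝ᵥ ((Gmat β N)ᵀ *ᵥ x) = x ⬝ᵥ (Gmat β N *ᵥ x) := by
    rw [Matrix.mulVec_transpose, dotProduct_comm, Matrix.dotProduct_mulVec]
  simp only [Kmat, Matrix.add_mulVec, Matrix.smul_mulVec, dotProduct_add, dotProduct_smul,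
    htranspose, smul_eq_mul]
  nlinarith

theorem c0_pos {α τ : ℝ} (hα1 : α < 1) (hτ : 0 < τ) : 0 < c0 α τ := by
  unfold c0
  have hΓ : 0 < Real.Gamma (2 - α) := Real.Gamma_pos_of_pos (by linarith)
  have hσ : 0 < 1 - α / 2 := by linarith
  positivity

theorem A0_eigenvalues_pos_re_general (N : ℕ)
    (β α h τ e1 e2 : ℝ) (hβ1 : 1 < β) (hβ2 : β < 2)
    (hα1 : α < 1) (hh : 0 < h) (hτ : 0 < τ)
    (he1 : 0 < e1) (he2 : 0 < e2) :
    ∀ μ ∈ spectrum ℂ ((A0mat β α h τ e1 e2 N).map (Complex.ofReal : ℝ → ℂ)),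
      0 < μ.re := by
  intro μ hμ
  have hc : 0 < h ^ β * c0 α τ := mul_pos (Real.rpow_pos_of_pos hh β) (c0_pos hα1 hτ)
  refine hc.trans_le (Matrix.le_re_of_mem_spectrum_map_ofReal _ _ (fun x => ?_) hμ)
  have hK := dotProduct_Kmat_mulVec_nonpos hβ1 hβ2 he1.le he2.le N x
  have hσ : 0 ≤ 1 - α / 2 := by linarith
  simp only [A0mat, Matrix.sub_mulVec, Matrix.smul_mulVec, Matrix.one_mulVec, dotProduct_sub,
    dotProduct_smul, smul_eq_mul]
  nlinarith

theorem A0_eigenvalues_pos_re (N : ℕ) (hN : 3 ≤ N)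
    (β α h τ e1 e2 : ℝ) (hβ1 : 1 < β) (hβ2 : β < 2)
    (hα0 : 0 < α) (hα1 : α < 1) (hh : 0 < h) (hτ : 0 < τ)
    (he1 : 0 < e1) (he2 : 0 < e2) :
    ∀ μ ∈ spectrum ℂ ((A0mat β α h τ e1 e2 N).map (Complex.ofReal : ℝ → ℂ)),
      0 < μ.re :=
  A0_eigenvalues_pos_re_general N β α h τ e1 e2 hβ1 hβ2 hα1 hh hτ he1 he2
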